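/- (Sub-fractional Black–Scholes formula, case a = b = 1/√2.) Let H ∈ (0,1), σ > 0, r ∈ ℝ, T > 0, E > 0, S₀ > 0. Note that for a = b = 1/√2 the gfBm variance coefficient equals (a+b)² − 2^{2H}ab = 2 − 2^{2H−1} > 0. Set v := σ²(2 − 2^{2H−1})T^{2H}, x₀ := ln S₀, and let p(x) = (2πv)^{−1/2}·exp(−(x − x₀ + v/2)²/(2v)). Then e^{−rT}·∫_{ℝ} max(e^{x + rT} − E, 0)·p(x) dx = S₀·N(d₁) − E·e^{−rT}·N(d₂), where N is the standard normal cumulative distribution function, d₁ = (ln(S₀/E) + rT + (1 − 2^{2H−2})σ²T^{2H})/(σ·√((2 − 2^{2H−1})T^{2H})) and d₂ = (ln(S₀/E) + rT − (1 − 2^{2H−2})σ²T^{2H})/(σ·√((2 − 2^{2H−1})T^{2H})). -/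

import Mathlib

open Real MeasureTheory

/-- The standard normal cumulative distribution function. -/
noncomputable def stdNormalCDF (z : ℝ) : ℝ :=
  ∫ x in Set.Iic z, Real.exp (-x ^ 2 / 2) / Real.sqrt (2 * π)

/-! The log-price is Gaussian with mean `log S₀ - v/2` and variance `v`. On the exercise region
`x > log E - rT` the payoff is `e^{x+rT} - E`; completing the square turns `e^x` times the
`N(m, v)` density into `e^{m+v/2}` times the `N(m+v, v)` density, so the price is a combination
of two Gaussian tail probabilities, and standardising `N(m, v) = m - √v • N(0, 1)` turns each tail
into a value of `N`. In the sub-fractional model `v/2 = (1 - 2^{2H-2}) σ² T^{2H}`. -/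

open ProbabilityTheory Set
open scoped NNReal

lemma stdNormalCDF_eq_measureReal_gaussianReal (z : ℝ) :
    stdNormalCDF z = (gaussianReal 0 1).real (Iic z) := by
  rw [measureReal_def, gaussianReal_apply_eq_integral _ one_ne_zero, ENNReal.toReal_ofReal
    (setIntegral_nonneg measurableSet_Iic fun x _ ↦ gaussianPDFReal_nonneg _ _ _), stdNormalCDF]
  simp [gaussianPDFReal, div_eq_inv_mul]

lemma gaussianReal_eq_map_sub_sqrt_mul (m : ℝ) (v : ℝ≥0) :
    gaussianReal m v = (gaussianReal 0 1).map (fun z ↦ m - √v * z) := by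
  have hv : NNReal.mk ((-√(v : ℝ)) ^ 2) (sq_nonneg _) * 1 = v := by ext; simp
  rw [show (fun z ↦ m - √v * z) = (m + ·) ∘ (-√v * ·) by ext; simp; ring,
    ← Measure.map_map (by fun_prop) (by fun_prop), gaussianReal_map_const_mul, hv,
    gaussianReal_map_const_add]
  simp

lemma setIntegral_Ioi_gaussianPDFReal (m k : ℝ) {v : ℝ≥0} (hv : v ≠ 0) :
    ∫ x in Ioi k, gaussianPDFReal m v x = stdNormalCDF ((m - k) / √v) := by
  have hs : 0 < √(v : ℝ) := by positivity
  have : NullSingletonClass (gaussianReal 0 1) := nullSingletonClass_gaussianReal one_ne_zero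
  have hpre : (fun z ↦ m - √v * z) ⁻¹' Ioi k = Iio ((m - k) / √v) := by
    ext z
    simp only [mem_preimage, mem_Ioi, mem_Iio, lt_div_iff₀ hs]
    constructor <;> intro h <;> linarith
  rw [← ENNReal.toReal_ofReal
      (setIntegral_nonneg measurableSet_Ioi fun x _ ↦ gaussianPDFReal_nonneg _ _ _),
    ← gaussianReal_apply_eq_integral _ hv, ← measureReal_def, gaussianReal_eq_map_sub_sqrt_mul,
    map_measureReal_apply (by fun_prop) measurableSet_Ioi, hpre,
    stdNormalCDF_eq_measureReal_gaussianReal,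
    measureReal_congr (Iio_ae_eq_Iic (μ := gaussianReal 0 1))]

lemma exp_mul_gaussianPDFReal (m : ℝ) (v : ℝ≥0) (x : ℝ) :
    exp x * gaussianPDFReal m v x = exp (m + v / 2) * gaussianPDFReal (m + v) v x := by
  rcases eq_or_ne v 0 with rfl | hv
  · simp
  have hv' : (v : ℝ) ≠ 0 := by exact_mod_cast hv
  simp only [gaussianPDFReal]
  rw [mul_left_comm, ← exp_add, mul_left_comm, ← exp_add]
  congr 2
  field_simp
  ring

lemma integral_call_payoff_mul_gaussianPDFReal (m c : ℝ) {v : ℝ≥0} (hv : v ≠ 0) {E : ℝ}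
    (hE : 0 < E) :
    ∫ x, max (exp (x + c) - E) 0 * gaussianPDFReal m v x
      = exp (c + m + v / 2) * stdNormalCDF ((m + v + c - log E) / √v)
        - E * stdNormalCDF ((m + c - log E) / √v) := by
  have payoff : ∀ x, max (exp (x + c) - E) 0 * gaussianPDFReal m v x
      = (Ioi (log E - c)).indicator (fun x ↦ exp (c + m + v / 2) * gaussianPDFReal (m + v) v x
          - E * gaussianPDFReal m v x) x := by
    intro x
    by_cases hx : log E - c < x
    · have hexp : E < exp (x + c) := by rw [← log_lt_iff_lt_exp hE]; linarith
      rw [Set.indicator_of_mem (mem_Ioi.mpr hx), max_eq_left (by linarith), exp_add,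
        add_assoc c, exp_add c]
      linear_combination exp c * exp_mul_gaussianPDFReal m v x
    · have hexp : exp (x + c) ≤ E := by rw [← le_log_iff_exp_le hE]; linarith
      rw [Set.indicator_of_notMem (mt mem_Ioi.mp hx), max_eq_right (by linarith), zero_mul]
  simp_rw [payoff]
  rw [integral_indicator measurableSet_Ioi,
    integral_sub ((integrable_gaussianPDFReal _ _).const_mul _).integrableOn
      ((integrable_gaussianPDFReal _ _).const_mul _).integrableOn,
    integral_const_mul, integral_const_mul, setIntegral_Ioi_gaussianPDFReal _ _ hv,
    setIntegral_Ioi_gaussianPDFReal _ _ hv, sub_sub_eq_add_sub, sub_sub_eq_add_sub]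

theorem black_scholes_call_of_gaussianPDFReal (r T S₀ E : ℝ) (hS₀ : 0 < S₀) (hE : 0 < E)
    {v : ℝ≥0} (hv : v ≠ 0) :
    exp (-(r * T)) * ∫ x, max (exp (x + r * T) - E) 0 * gaussianPDFReal (log S₀ - v / 2) v x
      = S₀ * stdNormalCDF ((log (S₀ / E) + r * T + v / 2) / √v)
        - E * exp (-(r * T)) * stdNormalCDF ((log (S₀ / E) + r * T - v / 2) / √v) := by
  have hd₁ : log S₀ - v / 2 + v + r * T - log E = log (S₀ / E) + r * T + v / 2 := by
    rw [log_div hS₀.ne' hE.ne']; ring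
  have hd₂ : log S₀ - v / 2 + r * T - log E = log (S₀ / E) + r * T - v / 2 := by
    rw [log_div hS₀.ne' hE.ne']; ring
  have hdiscount : exp (-(r * T)) * exp (r * T + (log S₀ - v / 2) + v / 2) = S₀ := by
    rw [← exp_add, show -(r * T) + (r * T + (log S₀ - v / 2) + v / 2) = log S₀ by ring,
      exp_log hS₀]
  rw [integral_call_payoff_mul_gaussianPDFReal _ _ hv hE, hd₁, hd₂]
  linear_combination stdNormalCDF ((log (S₀ / E) + r * T + v / 2) / √v) * hdiscount

lemma sq_one_div_sqrt_two_add_sub_rpow (H : ℝ) :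
    ((1 / √2) + (1 / √2)) ^ 2 - (2 : ℝ) ^ (2 * H) * (1 / √2) * (1 / √2)
      = 2 - (2 : ℝ) ^ (2 * H - 1) := by
  have hsq : (1 / √2 : ℝ) ^ 2 = 1 / 2 := by rw [div_pow, sq_sqrt zero_le_two, one_pow]
  rw [rpow_sub two_pos, rpow_one]
  linear_combination (4 - (2 : ℝ) ^ (2 * H)) * hsq

lemma two_sub_two_rpow_pos {H : ℝ} (hH : H < 1) : 0 < 2 - (2 : ℝ) ^ (2 * H - 1) := by
  have : (2 : ℝ) ^ (2 * H - 1) < 2 ^ (1 : ℝ) :=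
    rpow_lt_rpow_of_exponent_lt one_lt_two (by linarith)
  rw [rpow_one] at this
  linarith

lemma rpow_neg_one_half_mul_exp_eq_gaussianPDFReal (m : ℝ) (v : ℝ≥0) (x : ℝ) :
    (2 * π * v) ^ (-(1 : ℝ) / 2) * exp (-(x - m) ^ 2 / (2 * v)) = gaussianPDFReal m v x := by
  rw [gaussianPDFReal, neg_div, rpow_neg (by positivity), ← sqrt_eq_rpow]

/-- **Sub-fractional Black–Scholes formula (case `a = b = 1/√2`).**
For `a = b = 1/√2` the gfBm variance coefficient is
`(a+b)² - 2^{2H} a b = 2 - 2^{2H-1} > 0`.  With effective variance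
`v = σ²(2 - 2^{2H-1}) T^{2H}` and Gaussian log-price density `p`, the discounted
expected call payoff equals `S₀ N(d₁) - E e^{-rT} N(d₂)` where
`d₁ = (ln(S₀/E) + rT + (1 - 2^{2H-2})σ²T^{2H})/(σ √((2 - 2^{2H-1})T^{2H}))` and
`d₂ = (ln(S₀/E) + rT - (1 - 2^{2H-2})σ²T^{2H})/(σ √((2 - 2^{2H-1})T^{2H}))`. -/
theorem subfractional_black_scholes_formula
    (H : ℝ) (hH : H ∈ Set.Ioo (0 : ℝ) 1)
    (σ : ℝ) (hσ : 0 < σ) (r : ℝ) (T : ℝ) (hT : 0 < T)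
    (E : ℝ) (hE : 0 < E) (S₀ : ℝ) (hS₀ : 0 < S₀)
    (v : ℝ) (hv : v = σ ^ 2 * (2 - (2 : ℝ) ^ (2 * H - 1)) * T ^ (2 * H))
    (x₀ : ℝ) (hx₀ : x₀ = Real.log S₀)
    (p : ℝ → ℝ)
    (hp : ∀ x : ℝ, p x = (2 * π * v) ^ (-(1 : ℝ) / 2) *
      Real.exp (-(x - x₀ + v / 2) ^ 2 / (2 * v))) :
    (((1 / Real.sqrt 2) + (1 / Real.sqrt 2)) ^ 2
        - (2 : ℝ) ^ (2 * H) * (1 / Real.sqrt 2) * (1 / Real.sqrt 2)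
      = 2 - (2 : ℝ) ^ (2 * H - 1) ∧ 0 < 2 - (2 : ℝ) ^ (2 * H - 1)) ∧
    Real.exp (-(r * T)) * ∫ x : ℝ, max (Real.exp (x + r * T) - E) 0 * p x
      = S₀ * stdNormalCDF
          ((Real.log (S₀ / E) + r * T + (1 - (2 : ℝ) ^ (2 * H - 2)) * σ ^ 2 * T ^ (2 * H))
            / (σ * Real.sqrt ((2 - (2 : ℝ) ^ (2 * H - 1)) * T ^ (2 * H))))
        - E * Real.exp (-(r * T)) * stdNormalCDF
          ((Real.log (S₀ / E) + r * T - (1 - (2 : ℝ) ^ (2 * H - 2)) * σ ^ 2 * T ^ (2 * H))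
            / (σ * Real.sqrt ((2 - (2 : ℝ) ^ (2 * H - 1)) * T ^ (2 * H)))) := by
  have hκ := two_sub_two_rpow_pos hH.2
  have hv₀ : 0 < v := by rw [hv]; positivity
  lift v to ℝ≥0 using hv₀.le
  have hpv : p = gaussianPDFReal (log S₀ - v / 2) v := by
    funext x
    rw [hp, ← rpow_neg_one_half_mul_exp_eq_gaussianPDFReal, hx₀,
      sub_sub_eq_add_sub, add_sub_right_comm]
  have hsqrt : √(v : ℝ) = σ * √((2 - (2 : ℝ) ^ (2 * H - 1)) * T ^ (2 * H)) := by
    rw [hv, mul_assoc, sqrt_mul (sq_nonneg σ), sqrt_sq hσ.le]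
  have hhalf : (v : ℝ) / 2 = (1 - (2 : ℝ) ^ (2 * H - 2)) * σ ^ 2 * T ^ (2 * H) := by
    rw [hv, show 2 * H - 2 = (2 * H - 1) - 1 by ring, rpow_sub_one two_ne_zero (2 * H - 1)]
    ring
  refine ⟨⟨sq_one_div_sqrt_two_add_sub_rpow H, hκ⟩, ?_⟩
  rw [hpv, black_scholes_call_of_gaussianPDFReal r T S₀ E hS₀ hE (by exact_mod_cast hv₀.ne'),
    hhalf, hsqrt]
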